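/- Fix r > 0 and s with 0 < s < r/16, and define a sequence by a_0 = min(s, r/16) = s and a_{j+1} = (r·a_j² + (a_j − s)³)^{1/3} + s for j ≥ 0. Then a_{j+1} ≥ r^{1/3}·a_j^{2/3} for all j ≥ 0, and consequently a_j ≥ r·(s/r)^{(2/3)^j} for all j ≥ 0; in particular a_j → r as j → ∞ if a_j ≤ r for all j, and more precisely r·(s/r)^{(2/3)^j} → r as j → ∞. -/

import Mathlib

open Filter

/-- Growth of the iterated radii `a_{j+1} = (r a_j² + (a_j − s)³)^{1/3} + s`. -/
theorem radii_recursion_growth (r s : ℝ) (hr : 0 < r) (hs : 0 < s) (hsr : s < r / 16)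
    (a : ℕ → ℝ) (ha0 : a 0 = min s (r / 16))
    (harec : ∀ j : ℕ, a (j + 1) = (r * (a j) ^ 2 + (a j - s) ^ 3) ^ ((1 : ℝ) / 3) + s) :
    (a 0 = s) ∧
    (∀ j : ℕ, a (j + 1) ≥ r ^ ((1 : ℝ) / 3) * (a j) ^ ((2 : ℝ) / 3)) ∧
    (∀ j : ℕ, a j ≥ r * (s / r) ^ (((2 : ℝ) / 3) ^ j)) ∧
    ((∀ j : ℕ, a j ≤ r) → Tendsto a atTop (nhds r)) ∧
    Tendsto (fun j : ℕ => r * (s / r) ^ (((2 : ℝ) / 3) ^ j)) atTop (nhds r) := by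
  have h0 : a 0 = s := by rw [ha0, min_eq_left hsr.le]
  -- a j ≥ s for all j
  have hges : ∀ j, s ≤ a j := by
    intro j
    induction j with
    | zero => rw [h0]
    | succ n ih =>
      rw [harec n]
      have hnn : 0 ≤ r * (a n) ^ 2 + (a n - s) ^ 3 := by
        have h1 : 0 ≤ r * (a n) ^ 2 := by positivity
        have h2 : 0 ≤ (a n - s) ^ 3 := by
          apply pow_nonneg; linarith
        linarith
      have := Real.rpow_nonneg hnn ((1:ℝ)/3)
      linarith
  have hapos : ∀ j, 0 < a j := fun j => lt_of_lt_of_le hs (hges j)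
  have hgrow : ∀ j : ℕ, a (j + 1) ≥ r ^ ((1 : ℝ) / 3) * (a j) ^ ((2 : ℝ) / 3) := by
    intro j
    rw [harec j]
    have hnn : 0 ≤ r * (a j) ^ 2 := by positivity
    have h2 : 0 ≤ (a j - s) ^ 3 := by
      apply pow_nonneg; linarith [hges j]
    have hle : (r * (a j) ^ 2) ^ ((1:ℝ)/3) ≤ (r * (a j) ^ 2 + (a j - s) ^ 3) ^ ((1:ℝ)/3) := by
      apply Real.rpow_le_rpow hnn (by linarith) (by norm_num)
    have heq : (r * (a j) ^ 2) ^ ((1:ℝ)/3) = r ^ ((1:ℝ)/3) * (a j) ^ ((2:ℝ)/3) := by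
      rw [Real.mul_rpow hr.le (by positivity)]
      congr 1
      rw [← Real.rpow_natCast (a j) 2, ← Real.rpow_mul (hapos j).le]
      norm_num
    nlinarith [heq, hle]
  have hlb : ∀ j : ℕ, a j ≥ r * (s / r) ^ (((2 : ℝ) / 3) ^ j) := by
    intro j
    induction j with
    | zero =>
      simp only [pow_zero, Real.rpow_one]
      rw [h0]
      field_simp
      exact le_rfl
    | succ n ih =>
      have hsr0 : 0 ≤ s / r := by positivity
      have hlbn : 0 ≤ r * (s / r) ^ (((2:ℝ)/3) ^ n) := by positivity
      calc a (n + 1) ≥ r ^ ((1:ℝ)/3) * (a n) ^ ((2:ℝ)/3) := hgrow n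
        _ ≥ r ^ ((1:ℝ)/3) * (r * (s / r) ^ (((2:ℝ)/3) ^ n)) ^ ((2:ℝ)/3) := by
            apply mul_le_mul_of_nonneg_left _ (Real.rpow_nonneg hr.le _)
            exact Real.rpow_le_rpow hlbn ih (by norm_num)
        _ = r * (s / r) ^ (((2:ℝ)/3) ^ (n + 1)) := by
            rw [Real.mul_rpow hr.le (Real.rpow_nonneg hsr0 _),
              ← Real.rpow_mul hsr0, ← mul_assoc, ← Real.rpow_add hr, pow_succ]
            norm_num
  have hbd : Tendsto (fun j : ℕ => r * (s / r) ^ (((2 : ℝ) / 3) ^ j)) atTop (nhds r) := by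
    have h1 : Tendsto (fun j : ℕ => ((2:ℝ)/3) ^ j) atTop (nhds 0) :=
      tendsto_pow_atTop_nhds_zero_of_lt_one (by norm_num) (by norm_num)
    have h2 : Tendsto (fun j : ℕ => (s/r) ^ (((2:ℝ)/3) ^ j)) atTop (nhds ((s/r) ^ (0:ℝ))) :=
      Filter.Tendsto.rpow tendsto_const_nhds h1 (Or.inl (by positivity))
    have := h2.const_mul r
    simpa using this
  refine ⟨h0, hgrow, hlb, fun hub => ?_, hbd⟩
  exact tendsto_of_tendsto_of_tendsto_of_le_of_le hbd tendsto_const_nhds hlb hub
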